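/- Let F u = Σ_{i=0}^n A^{(i)}(x_i) ∂_i u, where each A^{(i)} is a real-valued C¹ function depending only on the variable x_i, and let D u = Σ_{j=0}^n λ_j(x) e_j ∂_j u with real-valued C¹ coefficients, λ_0 ≠ 0, β_i := λ_i/λ_0 with β_i ≠ 0. If for every i = 1, …, n the scalar equation β_i (∂_i A^{(i)} − ∂_0 A^{(0)}) − Σ_{j=0}^n A^{(j)} ∂_j(β_i) = 0 holds on Ω, then F is associated to D: for every C² function u with values in A_n(2, α_j, γ_ij) satisfying Du = 0, one has D(F u) = 0. -/

import Mathlib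

open scoped BigOperators

/-- Partial derivative in the `k`-th coordinate direction. -/
noncomputable def pd {m : ℕ} {F : Type*} [NormedAddCommGroup F] [NormedSpace ℝ F]
    (k : Fin m) (u : (Fin m → ℝ) → F) (x : Fin m → ℝ) : F :=
  fderiv ℝ u x (Pi.single k 1)

/-- The generalized Cauchy–Riemann operator `Du = Σⱼ λⱼ(x) eⱼ ∂ⱼu` (with `e₀ = 1`). -/
noncomputable def Dop {n : ℕ} {A : Type*} [NormedRing A] [NormedAlgebra ℝ A]
    (lam : Fin (n + 1) → (Fin (n + 1) → ℝ) → ℝ) (e : Fin (n + 1) → A)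
    (u : (Fin (n + 1) → ℝ) → A) (x : Fin (n + 1) → ℝ) : A :=
  ∑ j, lam j x • (e j * pd j u x)

/-!
Differentiating `Du = 0` in `xᵢ` and using the symmetry of second derivatives gives the
commutator identity `D(Fu) = F(Du) + Σⱼ cⱼ eⱼ ∂ⱼu` with `cⱼ = λⱼ A⁽ʲ⁾' - Σᵢ A⁽ⁱ⁾ ∂ᵢλⱼ`.
Multiplied by `λ₀²`, the `βᵢ`-condition says exactly `λ₀ cⱼ = λⱼ c₀`, so the remainder is
`(c₀/λ₀) Du`; both terms vanish where `Du` vanishes on the open set `Ω`.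
-/

lemma Finset.sum_smul_eq_zero_of_proportional {K M ι : Type*} [Field K] [AddCommGroup M]
    [Module K M] (s : Finset ι) {c w : ι → K} {v : ι → M} {i₀ : ι} (h₀ : w i₀ ≠ 0)
    (h : ∀ j ∈ s, w i₀ * c j = w j * c i₀) (hv : ∑ j ∈ s, w j • v j = 0) :
    ∑ j ∈ s, c j • v j = 0 := by
  have hscaled : w i₀ • ∑ j ∈ s, c j • v j = c i₀ • ∑ j ∈ s, w j • v j := by
    simp only [Finset.smul_sum, smul_smul]
    exact Finset.sum_congr rfl fun j hj => by rw [h j hj, mul_comm]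
  rw [hv, smul_zero] at hscaled
  exact (smul_eq_zero.mp hscaled).resolve_left h₀

section PartialDerivatives

variable {m : ℕ} {F : Type*} [NormedAddCommGroup F] [NormedSpace ℝ F]

lemma pd_eq_zero_of_eventuallyEq_zero {k : Fin m} {u : (Fin m → ℝ) → F} {x : Fin m → ℝ}
    (h : u =ᶠ[nhds x] 0) : pd k u x = 0 := by
  simp [pd, h.fderiv_eq]

lemma pd_fun_sum {ι : Type*} (s : Finset ι) {f : ι → (Fin m → ℝ) → F} {x : Fin m → ℝ}
    (h : ∀ i ∈ s, DifferentiableAt ℝ (f i) x) (k : Fin m) :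
    pd k (fun y => ∑ i ∈ s, f i y) x = ∑ i ∈ s, pd k (f i) x := by
  simp [pd, fderiv_fun_sum h]

lemma pd_fun_smul {c : (Fin m → ℝ) → ℝ} {f : (Fin m → ℝ) → F} {x : Fin m → ℝ} (k : Fin m)
    (hc : DifferentiableAt ℝ c x) (hf : DifferentiableAt ℝ f x) :
    pd k (fun y => c y • f y) x = pd k c x • f x + c x • pd k f x := by
  simp [pd, fderiv_fun_smul hc hf, add_comm]

lemma pd_const_mul {A : Type*} [NormedRing A] [NormedAlgebra ℝ A]
    {f : (Fin m → ℝ) → A} {x : Fin m → ℝ} (k : Fin m) (a : A)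
    (hf : DifferentiableAt ℝ f x) :
    pd k (fun y => a * f y) x = a * pd k f x := by
  simp [pd, fderiv_const_mul hf a]

lemma pd_fun_div {f g : (Fin m → ℝ) → ℝ} {x : Fin m → ℝ} (k : Fin m)
    (hf : DifferentiableAt ℝ f x) (hg : DifferentiableAt ℝ g x) (hx : g x ≠ 0) :
    pd k (fun y => f y / g y) x = (pd k f x * g x - f x * pd k g x) / g x ^ 2 := by
  have hinv := (hasDerivAt_inv hx).comp_hasFDerivAt x hg.hasFDerivAt
  have h : HasFDerivAt (fun y => f y / g y) _ x := hf.hasFDerivAt.mul hinv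
  simp only [pd, h.fderiv, neg_smul, smul_neg, ContinuousLinearMap.add_apply, ContinuousLinearMap.neg_apply,
    ContinuousLinearMap.smul_apply, smul_eq_mul]
  field_simp
  ring

lemma pd_comp_apply {g : ℝ → ℝ} {x : Fin m → ℝ} (i k : Fin m)
    (hg : DifferentiableAt ℝ g (x i)) :
    pd k (fun y => g (y i)) x = if i = k then deriv g (x i) else 0 := by
  have h : HasFDerivAt (fun y => g (y i)) _ x :=
    hg.hasDerivAt.comp_hasFDerivAt x (hasFDerivAt_apply (𝕜 := ℝ) (F' := fun _ => ℝ) i x)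
  simp [pd, h.fderiv, Pi.single_apply]

lemma ContDiffAt.differentiableAt_pd {u : (Fin m → ℝ) → F} {x : Fin m → ℝ}
    (hu : ContDiffAt ℝ 2 u x) (k : Fin m) : DifferentiableAt ℝ (pd k u) x :=
  ((hu.fderiv_right le_rfl).differentiableAt one_ne_zero).clm_apply
    (differentiableAt_const _)

lemma ContDiffAt.pd_pd_comm {u : (Fin m → ℝ) → F} {x : Fin m → ℝ}
    (hu : ContDiffAt ℝ 2 u x) (i j : Fin m) : pd i (pd j u) x = pd j (pd i u) x := by
  have hd := (hu.fderiv_right le_rfl).differentiableAt one_ne_zero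
  have key : ∀ k l : Fin m, pd k (pd l u) x
      = fderiv ℝ (fderiv ℝ u) x (Pi.single k 1) (Pi.single l 1) := fun k l => by
    change fderiv ℝ (fun y => fderiv ℝ u y (Pi.single l 1)) x (Pi.single k 1) = _
    simp [fderiv_clm_apply hd (differentiableAt_const _)]
  rw [key, key]
  exact hu.isSymmSndFDerivAt (by simp) _ _

end PartialDerivatives


noncomputable def Fop {m : ℕ} {F : Type*} [NormedAddCommGroup F] [NormedSpace ℝ F]
    (Aco : Fin m → ℝ → ℝ) (u : (Fin m → ℝ) → F) (y : Fin m → ℝ) : F :=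
  ∑ i, Aco i (y i) • pd i u y

lemma pd_Fop {m : ℕ} {F : Type*} [NormedAddCommGroup F] [NormedSpace ℝ F]
    {Aco : Fin m → ℝ → ℝ} {u : (Fin m → ℝ) → F} {x : Fin m → ℝ}
    (hA : ∀ i, DifferentiableAt ℝ (Aco i) (x i)) (hu : ContDiffAt ℝ 2 u x) (j : Fin m) :
    pd j (Fop Aco u) x = deriv (Aco j) (x j) • pd j u x + ∑ i, Aco i (x i) • pd j (pd i u) x := by
  have hAd : ∀ i, DifferentiableAt ℝ (fun y : Fin m → ℝ => Aco i (y i)) x := fun i =>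
    (hA i).comp x (differentiableAt_apply i x)
  change pd j (fun y => ∑ i, Aco i (y i) • pd i u y) x = _
  rw [pd_fun_sum (f := fun i y => Aco i (y i) • pd i u y) _
    (fun i _ => (hAd i).smul (hu.differentiableAt_pd i))]
  simp only [pd_fun_smul j (hAd _) (hu.differentiableAt_pd _), pd_comp_apply _ j (hA _),
    Finset.sum_add_distrib, ite_smul, zero_smul, Finset.sum_ite_eq', Finset.mem_univ, if_true]

noncomputable def commCoeff {n : ℕ} (lam : Fin (n + 1) → (Fin (n + 1) → ℝ) → ℝ)
    (Aco : Fin (n + 1) → ℝ → ℝ) (j : Fin (n + 1)) (x : Fin (n + 1) → ℝ) : ℝ :=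
  lam j x * deriv (Aco j) (x j) - ∑ i, Aco i (x i) * pd i (lam j) x

section Commutator

variable {n : ℕ} {A : Type*} [NormedRing A] [NormedAlgebra ℝ A]
  {lam : Fin (n + 1) → (Fin (n + 1) → ℝ) → ℝ} {e : Fin (n + 1) → A}
  {Aco : Fin (n + 1) → ℝ → ℝ} {u : (Fin (n + 1) → ℝ) → A} {x : Fin (n + 1) → ℝ}

lemma pd_Dop (hlam : ∀ j, DifferentiableAt ℝ (lam j) x) (hu : ContDiffAt ℝ 2 u x)
    (i : Fin (n + 1)) :
    pd i (Dop lam e u) x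
      = ∑ j, (pd i (lam j) x • (e j * pd j u x) + lam j x • (e j * pd i (pd j u) x)) := by
  have hd := hu.differentiableAt_pd
  change pd i (fun y => ∑ j, lam j y • (e j * pd j u y)) x = _
  rw [pd_fun_sum (f := fun j y => lam j y • (e j * pd j u y)) _
    (fun j _ => (hlam j).smul ((hd j).const_mul (e j)))]
  simp only [pd_fun_smul i (hlam _) ((hd _).const_mul _), pd_const_mul i _ (hd _)]

lemma Dop_Fop (hlam : ∀ j, DifferentiableAt ℝ (lam j) x)
    (hA : ∀ i, DifferentiableAt ℝ (Aco i) (x i)) (hu : ContDiffAt ℝ 2 u x) :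
    Dop lam e (Fop Aco u) x
      = ∑ j, commCoeff lam Aco j x • (e j * pd j u x)
        + ∑ i, Aco i (x i) • pd i (Dop lam e u) x := by
  simp only [Dop, pd_Fop hA hu, pd_Dop hlam hu, commCoeff]
  simp only [mul_add, smul_add, Finset.mul_sum, Finset.smul_sum, mul_smul_comm, smul_smul,
    sub_smul, Finset.sum_smul, Finset.sum_add_distrib, Finset.sum_sub_distrib]
  have hfirst : ∑ j, ∑ i, (Aco i (x i) * pd i (lam j) x) • (e j * pd j u x)
      = ∑ i, ∑ j, (Aco i (x i) * pd i (lam j) x) • (e j * pd j u x) := Finset.sum_comm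
  have hsecond : ∑ j, ∑ i, (lam j x * Aco i (x i)) • (e j * pd j (pd i u) x)
      = ∑ i, ∑ j, (Aco i (x i) * lam j x) • (e j * pd i (pd j u) x) := by
    rw [Finset.sum_comm]
    simp only [mul_comm (lam _ x), hu.pd_pd_comm]
  rw [hfirst, hsecond]
  abel

lemma lam_zero_mul_commCoeff (hlam : ∀ j, DifferentiableAt ℝ (lam j) x) (h0 : lam 0 x ≠ 0)
    {j : Fin (n + 1)}
    (hcond : (lam j x / lam 0 x) * (deriv (Aco j) (x j) - deriv (Aco 0) (x 0))
        - (∑ i, Aco i (x i) * pd i (fun y => lam j y / lam 0 y) x) = 0) :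
    lam 0 x * commCoeff lam Aco j x = lam j x * commCoeff lam Aco 0 x := by
  have hsum : ∑ i, Aco i (x i) * pd i (fun y => lam j y / lam 0 y) x
      = (lam 0 x * ∑ i, Aco i (x i) * pd i (lam j) x
          - lam j x * ∑ i, Aco i (x i) * pd i (lam 0) x) / lam 0 x ^ 2 := by
    rw [Finset.mul_sum, Finset.mul_sum, ← Finset.sum_sub_distrib, Finset.sum_div]
    refine Finset.sum_congr rfl fun i _ => ?_
    rw [pd_fun_div i (hlam j) (hlam 0) h0]
    ring
  rw [hsum] at hcond
  field_simp at hcond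
  unfold commCoeff
  linear_combination hcond

end Commutator

theorem associated_of_beta_conditions_general {n : ℕ} {A : Type*}
    [NormedRing A] [NormedAlgebra ℝ A]
    (e : Fin (n + 1) → A)
    (lam : Fin (n + 1) → (Fin (n + 1) → ℝ) → ℝ)
    (hlam : ∀ j, ContDiff ℝ 1 (lam j))
    (Ω : Set (Fin (n + 1) → ℝ)) (hΩ : IsOpen Ω)
    (hlam0 : ∀ x ∈ Ω, lam 0 x ≠ 0)
    (Aco : Fin (n + 1) → ℝ → ℝ)
    (hAco : ∀ i, ContDiff ℝ 1 (Aco i))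
    (hcond : ∀ i : Fin (n + 1), i ≠ 0 → ∀ x ∈ Ω,
      (lam i x / lam 0 x) * (deriv (Aco i) (x i) - deriv (Aco 0) (x 0))
        - (∑ j, Aco j (x j) * pd j (fun y => lam i y / lam 0 y) x) = 0) :
    ∀ u : (Fin (n + 1) → ℝ) → A, ContDiffOn ℝ 2 u Ω →
      (∀ x ∈ Ω, Dop lam e u x = 0) →
      ∀ x ∈ Ω, Dop lam e (fun y => ∑ i, Aco i (y i) • pd i u y) x = 0 := by
  intro u hu hDu x hx
  have hlam_x : ∀ j, DifferentiableAt ℝ (lam j) x := fun j =>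
    (hlam j).differentiable one_ne_zero x
  have hAco_x : ∀ i, DifferentiableAt ℝ (Aco i) (x i) := fun i =>
    (hAco i).differentiable one_ne_zero _
  have hu_x : ContDiffAt ℝ 2 u x := hu.contDiffAt (hΩ.mem_nhds hx)
  have hpdDu : ∀ i, pd i (Dop lam e u) x = 0 := fun i =>
    pd_eq_zero_of_eventuallyEq_zero (Filter.eventually_of_mem (hΩ.mem_nhds hx) hDu)
  change Dop lam e (Fop Aco u) x = 0
  rw [Dop_Fop hlam_x hAco_x hu_x]
  simp only [hpdDu, smul_zero, Finset.sum_const_zero, add_zero]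
  refine Finset.univ.sum_smul_eq_zero_of_proportional (hlam0 x hx) (fun j _ => ?_) (hDu x hx)
  rcases eq_or_ne j 0 with rfl | hj
  · rfl
  · exact lam_zero_mul_commCoeff hlam_x (hlam0 x hx) (hcond j hj x hx)

/-- Given `Fu = Σᵢ A⁽ⁱ⁾(xᵢ)∂ᵢu` with each real C¹ coefficient `A⁽ⁱ⁾` depending only
on `xᵢ`, if the scalar equations
`βᵢ(∂ᵢA⁽ⁱ⁾ - ∂₀A⁽⁰⁾) - Σⱼ A⁽ʲ⁾∂ⱼ(βᵢ) = 0` hold on `Ω` for `i = 1, …, n`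
(where `βᵢ = λᵢ/λ₀ ≠ 0`), then `F` is associated to `D`: `Du = 0 ⟹ D(Fu) = 0`. -/
theorem associated_of_beta_conditions {n : ℕ} {A : Type*}
    [NormedRing A] [NormedAlgebra ℝ A] [FiniteDimensional ℝ A]
    (α : Fin (n + 1) → ℝ) (γ : Fin (n + 1) → Fin (n + 1) → ℝ)
    (e : Fin (n + 1) → A) (he0 : e 0 = 1)
    (hsq : ∀ j, j ≠ 0 → e j * e j = algebraMap ℝ A (-(α j)))
    (hanti : ∀ i j, i ≠ 0 → j ≠ 0 → i ≠ j →
      e i * e j + e j * e i = algebraMap ℝ A (2 * γ i j))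
    (lam : Fin (n + 1) → (Fin (n + 1) → ℝ) → ℝ)
    (hlam : ∀ j, ContDiff ℝ 1 (lam j))
    (Ω : Set (Fin (n + 1) → ℝ)) (hΩ : IsOpen Ω)
    (hlam0 : ∀ x ∈ Ω, lam 0 x ≠ 0)
    (hbeta : ∀ i : Fin (n + 1), ∀ x ∈ Ω, lam i x / lam 0 x ≠ 0)
    (Aco : Fin (n + 1) → ℝ → ℝ)
    (hAco : ∀ i, ContDiff ℝ 1 (Aco i))
    (hcond : ∀ i : Fin (n + 1), i ≠ 0 → ∀ x ∈ Ω,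
      (lam i x / lam 0 x) * (deriv (Aco i) (x i) - deriv (Aco 0) (x 0))
        - (∑ j, Aco j (x j) * pd j (fun y => lam i y / lam 0 y) x) = 0) :
    ∀ u : (Fin (n + 1) → ℝ) → A, ContDiffOn ℝ 2 u Ω →
      (∀ x ∈ Ω, Dop lam e u x = 0) →
      ∀ x ∈ Ω, Dop lam e (fun y => ∑ i, Aco i (y i) • pd i u y) x = 0 :=
  associated_of_beta_conditions_general e lam hlam Ω hΩ hlam0 Aco hAco hcond
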